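/- In the determinization construction for VPAs: for a well-nested word w, states p, q of the original VPA A, and a subset state S of the determinized automaton containing the pair (p, q), if there is a run of A starting from configuration (q, ε) over w ending in state q', then the unique run of the determinized automaton starting from (S, ε) over w ends in a state S' containing (p, q'). -/

import Mathlib

/-- Kinds of symbols in a structured alphabet: open, close, neutral. -/
inductive SymKind | op | cl | ne
deriving DecidableEq

/-- Well-nested words over a structured alphabet, given by a kind function. -/
inductive WellNested {α : Type*} (k : α → SymKind) : List α → Prop
  | nil : WellNested k []
  | neutral {a : α} : k a = SymKind.ne → WellNested k [a]
  | concat {w₁ w₂ : List α} : w₁ ≠ [] → w₂ ≠ [] →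
      WellNested k w₁ → WellNested k w₂ → WellNested k (w₁ ++ w₂)
  | nest {a b : α} {w : List α} : k a = SymKind.op → k b = SymKind.cl →
      WellNested k w → WellNested k (a :: w ++ [b])


/-- The number of symbols of a given kind occurring in a word. -/
def countKind {α : Type*} (k : α → SymKind) (t : SymKind) (w : List α) : ℕ :=
  w.countP (fun s => decide (k s = t))

/-- A visibly pushdown automaton over a structured alphabet (given by `kind`). -/
structure VPA (α Q Γ : Type*) where
  kind : α → SymKind
  /-- push transitions: on an open symbol, move state and push a stack symbol -/
  Δop : Q → α → Q → Γ → Prop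
  /-- pop transitions: on a close symbol, pop the matching top stack symbol -/
  Δcl : Q → α → Γ → Q → Prop
  /-- neutral transitions -/
  Δne : Q → α → Q → Prop
  init : Set Q
  final : Set Q

/-- `A.Steps c w c'`: there is a run of the VPA `A` over the word `w` from
configuration `c` to configuration `c'` (stacks are lists with the top in front). -/
inductive VPA.Steps {α Q Γ : Type*} (A : VPA α Q Γ) :
    Q × List Γ → List α → Q × List Γ → Prop
  | nil (c : Q × List Γ) : VPA.Steps A c [] c
  | op {q q' : Q} {σ : List Γ} {x : Γ} {a : α} {w : List α} {c : Q × List Γ} :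
      A.kind a = SymKind.op → A.Δop q a q' x →
      VPA.Steps A (q', x :: σ) w c → VPA.Steps A (q, σ) (a :: w) c
  | cl {q q' : Q} {σ : List Γ} {x : Γ} {a : α} {w : List α} {c : Q × List Γ} :
      A.kind a = SymKind.cl → A.Δcl q a x q' →
      VPA.Steps A (q', σ) w c → VPA.Steps A (q, x :: σ) (a :: w) c
  | ne {q q' : Q} {σ : List Γ} {a : α} {w : List α} {c : Q × List Γ} :
      A.kind a = SymKind.ne → A.Δne q a q' →
      VPA.Steps A (q', σ) w c → VPA.Steps A (q, σ) (a :: w) c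

/-- A VPA accepts a word if some run from an initial state with empty stack
ends in a final state (with empty stack). -/
def VPA.Accepts {α Q Γ : Type*} (A : VPA α Q Γ) (w : List α) : Prop :=
  ∃ q ∈ A.init, ∃ q' ∈ A.final, A.Steps (q, []) w (q', [])

/-- The determinization construction for VPAs: states are sets of pairs of states,
stack symbols are sets of (state, stack symbol, state) triples. -/
def VPA.det {α Q Γ : Type*} (A : VPA α Q Γ) : VPA α (Set (Q × Q)) (Set (Q × Γ × Q)) where
  kind := A.kind
  Δop := fun S a S' T =>
    S' = {r : Q × Q | r.1 = r.2 ∧ ∃ p p' x, (p, p') ∈ S ∧ A.Δop p' a r.1 x} ∧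
    T = {t : Q × Γ × Q | ∃ p', (t.1, p') ∈ S ∧ A.Δop p' a t.2.2 t.2.1}
  Δcl := fun S a T S' =>
    S' = {r : Q × Q | ∃ p' q' x, (p', q') ∈ S ∧ (r.1, x, p') ∈ T ∧ A.Δcl q' a x r.2}
  Δne := fun S a S' =>
    S' = {r : Q × Q | ∃ q', (r.1, q') ∈ S ∧ A.Δne q' a r.2}
  init := {S | S = {r : Q × Q | r.1 = r.2 ∧ r.1 ∈ A.init}}
  final := {S | ∃ p q, (p, q) ∈ S ∧ p ∈ A.init ∧ q ∈ A.final}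

/-! A state `S` of the determinized automaton is a set of summaries `(p, q)`: `q` is reached
from `p` by a well-nested run since the last pending push. Completeness is proved by
induction on the well-nested word. For a nest `a w b`, the push on `a` stores in the stack
symbol the summaries `(p, x, q₁)` that the push may extend, and restarts the summaries at
`(q₁, q₁)`; the pop on `b` joins these stored summaries to the summaries of the inner run `w`.
The determinized automaton is deterministic, so its run over `w` is the one constructed. -/

namespace VPA

variable {α Q Γ : Type*} {A : VPA α Q Γ}

structure IsDeterministic (A : VPA α Q Γ) : Prop where
  op_unique {q a q₁ x₁ q₂ x₂} : A.Δop q a q₁ x₁ → A.Δop q a q₂ x₂ → q₁ = q₂ ∧ x₁ = x₂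
  cl_unique {q a x q₁ q₂} : A.Δcl q a x q₁ → A.Δcl q a x q₂ → q₁ = q₂
  ne_unique {q a q₁ q₂} : A.Δne q a q₁ → A.Δne q a q₂ → q₁ = q₂

theorem Steps.append {c c' c'' : Q × List Γ} {w₁ w₂ : List α}
    (h₁ : A.Steps c w₁ c') (h₂ : A.Steps c' w₂ c'') : A.Steps c (w₁ ++ w₂) c'' := by
  induction h₁ with
  | nil => exact h₂
  | op hk ht _ ih => exact .op hk ht (ih h₂)
  | cl hk ht _ ih => exact .cl hk ht (ih h₂)
  | ne hk ht _ ih => exact .ne hk ht (ih h₂)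

theorem Steps.exists_of_append {c c'' : Q × List Γ} {w₁ w₂ : List α}
    (h : A.Steps c (w₁ ++ w₂) c'') : ∃ c', A.Steps c w₁ c' ∧ A.Steps c' w₂ c'' := by
  induction w₁ generalizing c with
  | nil => exact ⟨c, .nil c, h⟩
  | cons a w ih =>
    cases h with
    | op hk ht hs => obtain ⟨c', h₁, h₂⟩ := ih hs; exact ⟨c', .op hk ht h₁, h₂⟩
    | cl hk ht hs => obtain ⟨c', h₁, h₂⟩ := ih hs; exact ⟨c', .cl hk ht h₁, h₂⟩
    | ne hk ht hs => obtain ⟨c', h₁, h₂⟩ := ih hs; exact ⟨c', .ne hk ht h₁, h₂⟩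

theorem Steps.exists_of_nest {a b : α} {w : List α} {q : Q} {σ : List Γ} {c : Q × List Γ}
    (ha : A.kind a = .op) (hb : A.kind b = .cl) (h : A.Steps (q, σ) (a :: w ++ [b]) c) :
    ∃ q₁ x q₂ y σ₂, A.Δop q a q₁ x ∧ A.Steps (q₁, x :: σ) w (q₂, y :: σ₂) ∧
      A.Δcl q₂ b y c.1 ∧ c.2 = σ₂ := by
  cases h with
  | cl hk => nomatch ha.symm.trans hk
  | ne hk => nomatch ha.symm.trans hk
  | op _ hop hs =>
    obtain ⟨c₂, hin, hlast⟩ := hs.exists_of_append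
    cases hlast with
    | op hk => nomatch hb.symm.trans hk
    | ne hk => nomatch hb.symm.trans hk
    | cl _ hcl hnil =>
      cases hnil
      exact ⟨_, _, _, _, _, hop, hin, hcl, rfl⟩

theorem Steps.stack_eq_of_wellNested {w : List α} (hw : WellNested A.kind w) {q q' : Q}
    {σ σ' : List Γ} (h : A.Steps (q, σ) w (q', σ')) : σ' = σ := by
  induction hw generalizing q q' σ σ' with
  | nil => cases h; rfl
  | neutral ha =>
    cases h with
    | op hk => nomatch ha.symm.trans hk
    | cl hk => nomatch ha.symm.trans hk
    | ne _ _ hnil => cases hnil; rfl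
  | concat _ _ _ _ ih₁ ih₂ =>
    obtain ⟨⟨_, _⟩, h₁, h₂⟩ := h.exists_of_append
    exact (ih₂ h₂).trans (ih₁ h₁)
  | nest ha hb _ ih =>
    obtain ⟨_, _, _, _, _, _, hin, _, rfl⟩ := h.exists_of_nest ha hb
    exact (List.cons.inj (ih hin)).2

theorem IsDeterministic.steps_unique (hA : A.IsDeterministic) {c c₁ c₂ : Q × List Γ}
    {w : List α} (h₁ : A.Steps c w c₁) (h₂ : A.Steps c w c₂) : c₁ = c₂ := by
  induction h₁ generalizing c₂ with
  | nil => cases h₂; rfl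
  | op hk ht _ ih =>
    cases h₂ with
    | op _ ht' hs' =>
      obtain ⟨rfl, rfl⟩ := hA.op_unique ht ht'
      exact ih hs'
    | cl hk' => nomatch hk.symm.trans hk'
    | ne hk' => nomatch hk.symm.trans hk'
  | cl hk ht _ ih =>
    cases h₂ with
    | op hk' => nomatch hk.symm.trans hk'
    | cl _ ht' hs' =>
      obtain rfl := hA.cl_unique ht ht'
      exact ih hs'
    | ne hk' => nomatch hk.symm.trans hk'
  | ne hk ht _ ih =>
    cases h₂ with
    | op hk' => nomatch hk.symm.trans hk'
    | cl hk' => nomatch hk.symm.trans hk'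
    | ne _ ht' hs' =>
      obtain rfl := hA.ne_unique ht ht'
      exact ih hs'

theorem det_isDeterministic (A : VPA α Q Γ) : A.det.IsDeterministic where
  op_unique h₁ h₂ := ⟨h₁.1.trans h₂.1.symm, h₁.2.trans h₂.2.symm⟩
  cl_unique h₁ h₂ := h₁.trans h₂.symm
  ne_unique h₁ h₂ := h₁.trans h₂.symm

theorem exists_det_steps_of_steps {w : List α} (hw : WellNested A.kind w) {p q q' : Q}
    {σ : List Γ} {S : Set (Q × Q)} (hS : (p, q) ∈ S) (h : A.Steps (q, σ) w (q', σ))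
    (τ : List (Set (Q × Γ × Q))) :
    ∃ S', A.det.Steps (S, τ) w (S', τ) ∧ (p, q') ∈ S' := by
  induction hw generalizing p q q' σ S τ with
  | nil => cases h; exact ⟨S, .nil _, hS⟩
  | neutral ha =>
    cases h with
    | op hk => nomatch ha.symm.trans hk
    | cl hk => nomatch ha.symm.trans hk
    | ne hk hne hnil =>
      cases hnil
      exact ⟨_, .ne hk rfl (.nil _), q, hS, hne⟩
  | concat _ _ hw₁ _ ih₁ ih₂ =>
    obtain ⟨⟨q₁, σ₁⟩, h₁, h₂⟩ := h.exists_of_append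
    obtain rfl := Steps.stack_eq_of_wellNested hw₁ h₁
    obtain ⟨S₁, hd₁, hm₁⟩ := ih₁ hS h₁ τ
    obtain ⟨S₂, hd₂, hm₂⟩ := ih₂ hm₁ h₂ τ
    exact ⟨S₂, hd₁.append hd₂, hm₂⟩
  | @nest a b w ha hb hw ih =>
    obtain ⟨q₁, x, q₂, y, _, hop, hin, hcl, rfl⟩ := h.exists_of_nest ha hb
    obtain ⟨rfl, -⟩ := List.cons.inj (Steps.stack_eq_of_wellNested hw hin)
    have hS₁ : (q₁, q₁) ∈ {r : Q × Q | r.1 = r.2 ∧ ∃ p p' x, (p, p') ∈ S ∧ A.Δop p' a r.1 x} :=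
      ⟨rfl, p, q, y, hS, hop⟩
    obtain ⟨S₂, hd, hm⟩ := ih hS₁ hin
      ({t : Q × Γ × Q | ∃ p', (t.1, p') ∈ S ∧ A.Δop p' a t.2.2 t.2.1} :: τ)
    exact ⟨_, .op ha ⟨rfl, rfl⟩ (hd.append (.cl hb rfl (.nil _))), q₁, q₂, y, hm, ⟨q, hS, hop⟩, hcl⟩

end VPA

/-- Soundness of the subset construction: if `(p, q) ∈ S` and `A` has a run from
`(q, ε)` over a well-nested word `w` ending in state `q'`, then the (unique) run of
the determinized automaton from `(S, ε)` over `w` exists and ends in a state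
containing `(p, q')`. -/
theorem vpa_det_complete {α Q Γ : Type*} (A : VPA α Q Γ)
    {w : List α} (hw : WellNested A.kind w)
    {p q q' : Q} {σ : List Γ} {S : Set (Q × Q)}
    (hS : (p, q) ∈ S) (hrun : A.Steps (q, []) w (q', σ)) :
    (∃ S' : Set (Q × Q), A.det.Steps (S, []) w (S', []) ∧ (p, q') ∈ S') ∧
    (∀ (S' : Set (Q × Q)) (τ : List (Set (Q × Γ × Q))),
        A.det.Steps (S, []) w (S', τ) → (p, q') ∈ S') := by
  obtain rfl := VPA.Steps.stack_eq_of_wellNested hw hrun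
  obtain ⟨S', hdet, hmem⟩ := VPA.exists_det_steps_of_steps hw hS hrun []
  refine ⟨⟨S', hdet, hmem⟩, fun S'' τ hdet' => ?_⟩
  obtain ⟨rfl, -⟩ := Prod.mk.inj ((VPA.det_isDeterministic A).steps_unique hdet hdet')
  exact hmem
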